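/- Let P be an n×n row-stochastic matrix, λ ∈ (0,1), and X(λ) = (1−λ)(Id − λP)^{-1} = (x_{ij}). Then for every i, the diagonal entry dominates its column: x_{ii} = max_j x_{ji}. -/

import Mathlib

/-!
Write `G = (1 - l • P)⁻¹`, so that `X = (1 - l) • G` and each column `g = G e_i` solves
`g = e_i + l • P g`. Since `P` averages, `(P g) j` never exceeds `max g`; so at a maximiser `j ≠ i`
the identity gives `max g ≤ l * max g`, i.e. `max g ≤ 0`. The same argument applied to `-g` shows
`g ≥ 0`, hence `g i ≥ 0` and the maximum of the column is attained on the diagonal. This maximum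
principle, applied to `±v` for a solution of `v = l • P v`, also shows that `1 - l • P` is invertible.
-/

open Matrix Finset

namespace Matrix

variable {ι : Type*} [Fintype ι] [DecidableEq ι] {P : Matrix ι ι ℝ} {l : ℝ} {v : ι → ℝ}

lemma mulVec_le_of_mem_rowStochastic (hP : P ∈ rowStochastic ℝ ι) {c : ℝ} (hv : ∀ k, v k ≤ c)
    (j : ι) : (P *ᵥ v) j ≤ c :=
  calc (P *ᵥ v) j = ∑ k, P j k * v k := rfl
    _ ≤ ∑ k, P j k * c := sum_le_sum fun k _ => mul_le_mul_of_nonneg_left (hv k) (hP.1 j k)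
    _ = c := by rw [← sum_mul, sum_row_of_mem_rowStochastic hP, one_mul]

lemma nonpos_of_isMax_of_le_smul_mulVec (hP : P ∈ rowStochastic ℝ ι) (hl0 : 0 ≤ l)
    (hl1 : l < 1) {j : ι} (hmax : ∀ k, v k ≤ v j) (hj : v j ≤ l * (P *ᵥ v) j) : v j ≤ 0 := by
  have hPv : (P *ᵥ v) j ≤ v j := mulVec_le_of_mem_rowStochastic hP hmax j
  nlinarith

lemma nonpos_of_le_smul_mulVec (hP : P ∈ rowStochastic ℝ ι) (hl0 : 0 ≤ l) (hl1 : l < 1)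
    (hv : ∀ j, v j ≤ l * (P *ᵥ v) j) (j : ι) : v j ≤ 0 := by
  have : Nonempty ι := ⟨j⟩
  obtain ⟨j₀, hj₀⟩ := Finite.exists_max v
  exact (hj₀ j).trans (nonpos_of_isMax_of_le_smul_mulVec hP hl0 hl1 hj₀ (hv j₀))

lemma le_of_le_smul_mulVec_of_ne (hP : P ∈ rowStochastic ℝ ι) (hl0 : 0 ≤ l) (hl1 : l < 1)
    {i : ι} (hv : ∀ j, j ≠ i → v j ≤ l * (P *ᵥ v) j) (hi : 0 ≤ v i) (j : ι) : v j ≤ v i := by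
  have : Nonempty ι := ⟨i⟩
  obtain ⟨j₀, hj₀⟩ := Finite.exists_max v
  refine (hj₀ j).trans ?_
  rcases eq_or_ne j₀ i with rfl | hne
  · exact le_rfl
  · exact (nonpos_of_isMax_of_le_smul_mulVec hP hl0 hl1 hj₀ (hv j₀ hne)).trans hi

lemma isUnit_one_sub_smul_of_mem_rowStochastic (hP : P ∈ rowStochastic ℝ ι) (hl0 : 0 ≤ l)
    (hl1 : l < 1) : IsUnit (1 - l • P) := by
  rw [isUnit_iff_isUnit_det, isUnit_iff_ne_zero, Ne, ← exists_mulVec_eq_zero_iff]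
  rintro ⟨v, hv, hker⟩
  have hfix : ∀ j, v j = l * (P *ᵥ v) j := fun j => by
    have := congrFun hker j
    simp only [sub_mulVec, one_mulVec, smul_mulVec, Pi.sub_apply, Pi.smul_apply, smul_eq_mul,
      Pi.zero_apply] at this
    linarith
  refine hv (funext fun j => le_antisymm ?_ ?_)
  · exact nonpos_of_le_smul_mulVec hP hl0 hl1 (fun k => (hfix k).le) j
  · have := nonpos_of_le_smul_mulVec hP hl0 hl1 (v := -v)
      (fun k => by rw [mulVec_neg, Pi.neg_apply, Pi.neg_apply, hfix k]; linarith) j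
    simpa using this

lemma inv_one_sub_smul_apply (hP : P ∈ rowStochastic ℝ ι) (hl0 : 0 ≤ l) (hl1 : l < 1)
    (i j : ι) :
    (1 - l • P)⁻¹ j i = (1 : Matrix ι ι ℝ) j i + l * (P *ᵥ fun k => (1 - l • P)⁻¹ k i) j := by
  have hinv := mul_nonsing_inv _
    (isUnit_iff_isUnit_det _ |>.mp (isUnit_one_sub_smul_of_mem_rowStochastic hP hl0 hl1))
  rw [sub_mul, one_mul, sub_eq_iff_eq_add, smul_mul_assoc] at hinv
  exact congrFun₂ hinv j i

lemma inv_one_sub_smul_nonneg (hP : P ∈ rowStochastic ℝ ι) (hl0 : 0 ≤ l) (hl1 : l < 1)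
    (i j : ι) : 0 ≤ (1 - l • P)⁻¹ j i := by
  have := nonpos_of_le_smul_mulVec hP hl0 hl1 (v := -fun k => (1 - l • P)⁻¹ k i) (fun k => by
    simp only [mulVec_neg, Pi.neg_apply]
    rw [inv_one_sub_smul_apply hP hl0 hl1 i k, one_apply]
    split_ifs <;> linarith) j
  simpa using this

lemma inv_one_sub_smul_le_diag (hP : P ∈ rowStochastic ℝ ι) (hl0 : 0 ≤ l) (hl1 : l < 1)
    (i j : ι) : (1 - l • P)⁻¹ j i ≤ (1 - l • P)⁻¹ i i :=
  le_of_le_smul_mulVec_of_ne hP hl0 hl1 (v := fun k => (1 - l • P)⁻¹ k i)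
    (fun k hk => by rw [inv_one_sub_smul_apply hP hl0 hl1 i k, one_apply_ne hk, zero_add])
    (inv_one_sub_smul_nonneg hP hl0 hl1 i i) j

end Matrix

theorem stmt_7 (n : ℕ) (P : Matrix (Fin n) (Fin n) ℝ)
    (hnonneg : ∀ i j, 0 ≤ P i j) (hrow : ∀ i, ∑ j, P i j = 1)
    (l : ℝ) (hl0 : 0 < l) (hl1 : l < 1)
    (X : Matrix (Fin n) (Fin n) ℝ) (hX : X = (1 - l) • (1 - l • P)⁻¹) :
    ∀ i : Fin n,
      X i i = Finset.univ.sup' ⟨i, Finset.mem_univ i⟩ (fun j => X j i) := by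
  intro i
  have hP : P ∈ rowStochastic ℝ (Fin n) := mem_rowStochastic_iff_sum.mpr ⟨hnonneg, hrow⟩
  refine le_antisymm (le_sup' (fun j => X j i) (mem_univ i)) (sup'_le _ _ fun j _ => ?_)
  rw [hX, Matrix.smul_apply, Matrix.smul_apply, smul_eq_mul, smul_eq_mul]
  exact mul_le_mul_of_nonneg_left (inv_one_sub_smul_le_diag hP hl0.le hl1 i j) (by linarith)
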